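/- Let F = x³+y³+z³+t·x·y·z with t³+27 ≠ 0. The second Hessian H₂(F) of F is, up to a nonzero constant factor and modulo the ideal generated by F, equal to (x³−y³)(x³−z³)(y³−z³). -/

import Mathlib

/-!
The Hessian of `F` is `H = -6t²·F + 8(t³+27)·xyz`, so `Jac(F, H, w) = 8(t³+27)·Jac(F, xyz, w)`.
For the Hesse cubic the rows `∂Ω₁` and `∂Ω₂` are constant multiples of `∇F`, hence the first two
terms of `H₂(F)` vanish and `H₂(F) = -160(t³+27)·Jac(F, xyz, ∇Ψ)`. The bordered Hessian is the
adjugate quadratic form `Ψ = ∇Hᵀ·adj(Hess F)·∇H`, which makes `Ψ` explicit, and the remaining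
Jacobian is `-20736(t³+27)²·(x³-y³)(x³-z³)(y³-z³)`. So `H₂(F)` equals the product times
`3317760(t³+27)³` exactly, not only modulo `F`.
-/

open MvPolynomial

/-- The Hesse pencil cubic `F = x³ + y³ + z³ + t·x·y·z`. -/
noncomputable def hesseF (t : ℂ) : MvPolynomial (Fin 3) ℂ :=
  X 0 ^ 3 + X 1 ^ 3 + X 2 ^ 3 + C t * X 0 * X 1 * X 2

/-- The Hessian matrix of the Hesse cubic. -/
noncomputable def hesseHM (t : ℂ) : Matrix (Fin 3) (Fin 3) (MvPolynomial (Fin 3) ℂ) :=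
  Matrix.of fun i j => pderiv i (pderiv j (hesseF t))

/-- The Hessian `H = det(Hessian matrix)` of the Hesse cubic. -/
noncomputable def hesseH (t : ℂ) : MvPolynomial (Fin 3) ℂ := (hesseHM t).det

/-- The vector `M = [M₁₁, M₂₂, M₃₃, M₃₂, M₃₁, M₂₁]` of 2×2 cofactor-type minors of
the Hessian matrix. -/
noncomputable def hesseM (t : ℂ) : Fin 6 → MvPolynomial (Fin 3) ℂ :=
  ![hesseHM t 1 1 * hesseHM t 2 2 - hesseHM t 1 2 * hesseHM t 2 1,
    hesseHM t 0 0 * hesseHM t 2 2 - hesseHM t 0 2 * hesseHM t 2 0,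
    hesseHM t 0 0 * hesseHM t 1 1 - hesseHM t 0 1 * hesseHM t 1 0,
    -(hesseHM t 0 0 * hesseHM t 1 2 - hesseHM t 0 2 * hesseHM t 1 0),
    hesseHM t 0 1 * hesseHM t 1 2 - hesseHM t 0 2 * hesseHM t 1 1,
    -(hesseHM t 0 1 * hesseHM t 2 2 - hesseHM t 0 2 * hesseHM t 2 1)]

/-- The vector `V_H = [Hₓₓ, H_yy, H_zz, 2H_yz, 2H_xz, 2H_xy]`. -/
noncomputable def hesseVH (t : ℂ) : Fin 6 → MvPolynomial (Fin 3) ℂ :=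
  ![pderiv 0 (pderiv 0 (hesseH t)), pderiv 1 (pderiv 1 (hesseH t)),
    pderiv 2 (pderiv 2 (hesseH t)), 2 * pderiv 1 (pderiv 2 (hesseH t)),
    2 * pderiv 0 (pderiv 2 (hesseH t)), 2 * pderiv 0 (pderiv 1 (hesseH t))]

/-- The "gradient" row `∂_•(Ω₁(M,V_H)) = ∂_•M ∘ V_H`. -/
noncomputable def hesseOmega1Row (t : ℂ) : Fin 3 → MvPolynomial (Fin 3) ℂ :=
  fun b => ∑ k : Fin 6, pderiv b (hesseM t k) * hesseVH t k

/-- The "gradient" row `∂_•(Ω₂(M,V_H)) = M ∘ ∂_•V_H`. -/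
noncomputable def hesseOmega2Row (t : ℂ) : Fin 3 → MvPolynomial (Fin 3) ℂ :=
  fun b => ∑ k : Fin 6, hesseM t k * pderiv b (hesseVH t k)

/-- The bordered Hessian polynomial `Ψ`. -/
noncomputable def hessePsi (t : ℂ) : MvPolynomial (Fin 3) ℂ :=
  -(Matrix.of
    ![![0, pderiv 0 (hesseH t), pderiv 1 (hesseH t), pderiv 2 (hesseH t)],
      ![pderiv 0 (hesseH t), hesseHM t 0 0, hesseHM t 0 1, hesseHM t 0 2],
      ![pderiv 1 (hesseH t), hesseHM t 1 0, hesseHM t 1 1, hesseHM t 1 2],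
      ![pderiv 2 (hesseH t), hesseHM t 2 0, hesseHM t 2 1, hesseHM t 2 2]]).det

/-- The Jacobian determinant with rows `∇f`, `∇g` and a given vector `w`. -/
noncomputable def jacRow (f g : MvPolynomial (Fin 3) ℂ)
    (w : Fin 3 → MvPolynomial (Fin 3) ℂ) : MvPolynomial (Fin 3) ℂ :=
  (Matrix.of
    ![![pderiv 0 f, pderiv 1 f, pderiv 2 f],
      ![pderiv 0 g, pderiv 1 g, pderiv 2 g],
      w]).det

/-- The second Hessian of the Hesse cubic (`d = 3`):
`H₂(F) = 3·H·Jac(F,H,Ω₁) + 9·H·Jac(F,H,Ω₂) − 20·Jac(F,H,Ψ)`. -/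
noncomputable def hesseH2 (t : ℂ) : MvPolynomial (Fin 3) ℂ :=
  C 3 * hesseH t * jacRow (hesseF t) (hesseH t) (hesseOmega1Row t)
    + C 9 * hesseH t * jacRow (hesseF t) (hesseH t) (hesseOmega2Row t)
    - C 20 * jacRow (hesseF t) (hesseH t)
        (fun b => pderiv b (hessePsi t))

@[simp]
theorem MvPolynomial.pderiv_ofNat {σ R : Type*} [CommSemiring R] (i : σ) (n : ℕ) [n.AtLeastTwo] :
    pderiv i (no_index (OfNat.ofNat n) : MvPolynomial σ R) = 0 := by
  rw [← Nat.cast_ofNat]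
  exact (pderiv i).map_natCast n

open Matrix in
theorem Matrix.det_bordered_fin_three {R : Type*} [CommRing R] (u w : Fin 3 → R)
    (A : Matrix (Fin 3) (Fin 3) R) :
    (of ![![0, u 0, u 1, u 2], ![w 0, A 0 0, A 0 1, A 0 2],
      ![w 1, A 1 0, A 1 1, A 1 2], ![w 2, A 2 0, A 2 1, A 2 2]]).det =
      -(u ⬝ᵥ (A.adjugate *ᵥ w)) := by
  rw [det_succ_row_zero, Fin.sum_univ_four]
  simp only [det_fin_three, adjugate_fin_three, dotProduct, mulVec, Fin.sum_univ_three,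
    submatrix_apply, of_apply, cons_val', cons_val, cons_val_fin_one, Fin.succAbove,
    Fin.reduceCastSucc, Fin.reduceSucc, Fin.reduceLT, ↓reduceIte, Fin.coe_ofNat_eq_mod]
  ring

section Jacobian

variable (f g : MvPolynomial (Fin 3) ℂ)

theorem jacRow_eq (w : Fin 3 → MvPolynomial (Fin 3) ℂ) :
    jacRow f g w = pderiv 0 f * (pderiv 1 g * w 2 - pderiv 2 g * w 1)
      - pderiv 1 f * (pderiv 0 g * w 2 - pderiv 2 g * w 0)
      + pderiv 2 f * (pderiv 0 g * w 1 - pderiv 1 g * w 0) := by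
  simp only [jacRow, Matrix.det_fin_three, Matrix.of_apply, Matrix.cons_val', Matrix.cons_val,
    Matrix.cons_val_fin_one]
  ring

theorem jacRow_mul_pderiv_self (c : MvPolynomial (Fin 3) ℂ) :
    jacRow f g (fun b => c * pderiv b f) = 0 := by
  rw [jacRow_eq]
  ring

theorem jacRow_C_mul_add_C_mul (a b : ℂ) (w : Fin 3 → MvPolynomial (Fin 3) ℂ) :
    jacRow f (C a * f + C b * g) w = C b * jacRow f g w := by
  simp only [jacRow_eq, map_add, pderiv_C_mul]
  ring

end Jacobian

section Hesse

open Matrix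

variable (t : ℂ)

theorem hesseHM_eq : hesseHM t = !![6 * X 0, C t * X 2, C t * X 1;
    C t * X 2, 6 * X 1, C t * X 0;
    C t * X 1, C t * X 0, 6 * X 2] := by
  refine Matrix.ext fun i j => ?_
  fin_cases i <;> fin_cases j <;>
    simp only [hesseHM, hesseF, of_apply, cons_val', cons_val, cons_val_fin_one, Fin.zero_eta,
      Fin.mk_one, Fin.reduceFinMk, map_add, Derivation.leibniz, Derivation.leibniz_pow,
      Derivation.map_one_eq_zero, derivation_C, pderiv_ofNat, pderiv_X, Pi.single_apply,
      Fin.isValue, Fin.reduceEq, ↓reduceIte, smul_eq_mul, nsmul_eq_mul, Nat.cast_ofNat,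
      Nat.reduceSub, map_zero] <;>
    ring

theorem hesseH_eq :
    hesseH t = C (-6 * t ^ 2) * hesseF t + C (8 * (t ^ 3 + 27)) * (X 0 * X 1 * X 2) := by
  simp only [hesseH, hesseHM_eq, det_fin_three, hesseF, of_apply, cons_val', cons_val,
    cons_val_fin_one, map_add, map_mul, map_pow, map_neg, map_ofNat]
  ring

theorem hesseM_eq : hesseM t = ![36 * X 1 * X 2 - C t ^ 2 * X 0 ^ 2,
    36 * X 0 * X 2 - C t ^ 2 * X 1 ^ 2, 36 * X 0 * X 1 - C t ^ 2 * X 2 ^ 2,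
    C t ^ 2 * X 1 * X 2 - 6 * C t * X 0 ^ 2, C t ^ 2 * X 0 * X 2 - 6 * C t * X 1 ^ 2,
    C t ^ 2 * X 0 * X 1 - 6 * C t * X 2 ^ 2] := by
  funext k
  fin_cases k <;>
    simp only [hesseM, hesseHM_eq, of_apply, cons_val', cons_val, cons_val_fin_one,
      Fin.zero_eta, Fin.mk_one, Fin.reduceFinMk, Fin.isValue] <;>
    ring

theorem hesseVH_eq : hesseVH t = ![C (-36 * t ^ 2) * X 0, C (-36 * t ^ 2) * X 1,
    C (-36 * t ^ 2) * X 2, C (4 * (t ^ 3 + 108)) * X 0, C (4 * (t ^ 3 + 108)) * X 1,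
    C (4 * (t ^ 3 + 108)) * X 2] := by
  funext k
  fin_cases k <;>
    simp only [hesseVH, hesseH_eq, hesseF, cons_val, Fin.zero_eta, Fin.mk_one, Fin.reduceFinMk,
      map_add, map_neg, map_mul, map_pow, map_ofNat, Derivation.leibniz, Derivation.leibniz_pow,
      Derivation.map_one_eq_zero, derivation_C, pderiv_ofNat, pderiv_X, Pi.single_apply,
      Fin.isValue, Fin.reduceEq, ↓reduceIte, smul_eq_mul, nsmul_eq_mul, Nat.cast_ofNat,
      Nat.reduceSub, map_zero] <;>
    ring

theorem hesseOmega1Row_eq :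
    hesseOmega1Row t = fun b => C (8 * t * (t ^ 3 - 216)) * pderiv b (hesseF t) := by
  funext b
  fin_cases b <;>
    simp only [hesseOmega1Row, Fin.sum_univ_six, hesseM_eq, hesseVH_eq, hesseF, cons_val,
      Fin.zero_eta, Fin.mk_one, Fin.reduceFinMk, map_add, map_sub, map_neg, map_mul, map_pow,
      map_ofNat, Derivation.leibniz, Derivation.leibniz_pow, derivation_C, pderiv_ofNat,
      pderiv_X, Pi.single_apply, Fin.isValue, Fin.reduceEq, ↓reduceIte, smul_eq_mul,
      nsmul_eq_mul, Nat.cast_ofNat, Nat.reduceSub] <;>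
    ring

theorem hesseOmega2Row_eq :
    hesseOmega2Row t = fun b => C (4 * t * (t ^ 3 - 216)) * pderiv b (hesseF t) := by
  funext b
  fin_cases b <;>
    simp only [hesseOmega2Row, Fin.sum_univ_six, hesseM_eq, hesseVH_eq, hesseF, cons_val,
      Fin.zero_eta, Fin.mk_one, Fin.reduceFinMk, map_add, map_sub, map_neg, map_mul, map_pow,
      map_ofNat, Derivation.leibniz, Derivation.leibniz_pow, derivation_C, pderiv_ofNat,
      pderiv_X, Pi.single_apply, Fin.isValue, Fin.reduceEq, ↓reduceIte, smul_eq_mul,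
      nsmul_eq_mul, Nat.cast_ofNat, Nat.reduceSub] <;>
    ring

theorem hesseH2_eq_jacRow_hessePsi :
    hesseH2 t = C (-160 * (t ^ 3 + 27)) *
      jacRow (hesseF t) (X 0 * X 1 * X 2) (fun b => pderiv b (hessePsi t)) := by
  rw [hesseH2, hesseOmega1Row_eq, hesseOmega2Row_eq, jacRow_mul_pderiv_self,
    jacRow_mul_pderiv_self, hesseH_eq, jacRow_C_mul_add_C_mul]
  simp only [map_mul, map_add, map_pow, map_neg, map_ofNat]
  ring

theorem hessePsi_eq_dotProduct_adjugate_mulVec :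
    hessePsi t = (fun i => pderiv i (hesseH t)) ⬝ᵥ
      ((hesseHM t).adjugate *ᵥ fun i => pderiv i (hesseH t)) := by
  rw [hessePsi, neg_eq_iff_eq_neg]
  exact det_bordered_fin_three (fun i => pderiv i (hesseH t)) (fun i => pderiv i (hesseH t))
    (hesseHM t)

theorem hessePsi_eq : hessePsi t =
    C (-324 * t ^ 6) * (X 0 ^ 6 + X 1 ^ 6 + X 2 ^ 6)
      + C (1656 * t ^ 6 + 124416 * t ^ 3 + 1679616) *
          (X 0 ^ 3 * X 1 ^ 3 + X 0 ^ 3 * X 2 ^ 3 + X 1 ^ 3 * X 2 ^ 3)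
      + C (-120 * t ^ 7 - 6480 * t ^ 4 - 559872 * t) *
          (X 0 * X 1 * X 2 * (X 0 ^ 3 + X 1 ^ 3 + X 2 ^ 3))
      + C (12 * t ^ 8 - 16848 * t ^ 5 - 699840 * t ^ 2) * (X 0 * X 1 * X 2) ^ 2 := by
  simp only [hessePsi_eq_dotProduct_adjugate_mulVec, adjugate_fin_three, dotProduct, mulVec,
    Fin.sum_univ_three, hesseHM_eq, hesseH_eq, hesseF, of_apply, cons_val', cons_val,
    cons_val_fin_one, map_add, map_sub, map_neg, map_mul, map_pow, map_ofNat,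
    Derivation.leibniz, Derivation.leibniz_pow, derivation_C, pderiv_ofNat, pderiv_X,
    Pi.single_apply, Fin.isValue, Fin.reduceEq, ↓reduceIte, smul_eq_mul, nsmul_eq_mul,
    Nat.cast_ofNat, Nat.reduceSub]
  ring

theorem jacRow_hesseF_hessePsi :
    jacRow (hesseF t) (X 0 * X 1 * X 2) (fun b => pderiv b (hessePsi t)) =
      C (-20736 * (t ^ 3 + 27) ^ 2) *
        ((X 0 ^ 3 - X 1 ^ 3) * (X 0 ^ 3 - X 2 ^ 3) * (X 1 ^ 3 - X 2 ^ 3)) := by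
  simp only [jacRow_eq, hessePsi_eq, hesseF, map_add, map_sub, map_neg, map_mul, map_pow,
    map_ofNat, Derivation.leibniz, Derivation.leibniz_pow, derivation_C, pderiv_ofNat, pderiv_X,
    Pi.single_apply, Fin.isValue, Fin.reduceEq, ↓reduceIte, smul_eq_mul, nsmul_eq_mul,
    Nat.cast_ofNat, Nat.reduceSub]
  ring

theorem hesseH2_eq : hesseH2 t = C (3317760 * (t ^ 3 + 27) ^ 3) *
    ((X 0 ^ 3 - X 1 ^ 3) * (X 0 ^ 3 - X 2 ^ 3) * (X 1 ^ 3 - X 2 ^ 3)) := by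
  rw [hesseH2_eq_jacRow_hessePsi, jacRow_hesseF_hessePsi, ← mul_assoc, ← map_mul]
  ring_nf

end Hesse

/-- For `t³+27 ≠ 0`, the second Hessian `H₂(F)` is, up to a nonzero constant and
modulo the ideal `(F)`, equal to `(x³−y³)(x³−z³)(y³−z³)`. -/
theorem hesse_second_hessian (t : ℂ) (ht : t ^ 3 + 27 ≠ 0) :
    ∃ c : ℂ, c ≠ 0 ∧
      hesseH2 t - C c * ((X 0 ^ 3 - X 1 ^ 3) * (X 0 ^ 3 - X 2 ^ 3) * (X 1 ^ 3 - X 2 ^ 3))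
        ∈ Ideal.span {hesseF t} := by
  refine ⟨3317760 * (t ^ 3 + 27) ^ 3, by simp [ht], ?_⟩
  rw [hesseH2_eq, sub_self]
  exact Ideal.zero_mem _
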